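/- Let k ≥ 3 and α ∈ ℝ^k. For each surjection σ : [k] → [m] define (σα)_j = Σ_{i : σ(i)=j} α_i, and let Λ_{k,m}(x², α) = Σ_{σ : [k]↠[m]} Σ_{j=1}^m (σα)_j². Then Λ_k(x², α) := Σ_{m=1}^k ((-1)^{m-1}/m) Λ_{k,m}(x², α) = 0. -/

import Mathlib

/-!
Expanding the squares,
`∑_σ ∑_j (σα)_j² = ∑_{i,i'} α_i α_{i'} · #{σ surjective | σ i' = σ i}`.
For `i = i'` this count is the number `s(k, m)` of surjections `[k] ↠ [m]`; for `i ≠ i'`,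
identifying `i` with `i'` shows it is `s(k - 1, m)`. So it suffices that
`∑_{m=1}^K (-1)^(m-1) s(n, m) / m = 0` whenever `2 ≤ n ≤ K`, which holds because the
recurrence `s(n + 1, m + 1) = (m + 1) (s(n, m + 1) + s(n, m))` (split by the value at `0`)
turns the sum into a telescoping one.
-/

open Finset Function

noncomputable def surjCount (n m : ℕ) : ℕ := Nat.card {f : Fin n → Fin m // Surjective f}

theorem Nat.card_surjective_congr {α α' β β' : Type*} (e : α ≃ α') (e' : β ≃ β') :
    Nat.card {f : α → β // Surjective f} = Nat.card {f : α' → β' // Surjective f} :=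
  Nat.card_congr <| (e.arrowCongr e').subtypeEquiv fun f => by
    show Surjective f ↔ Surjective (e' ∘ f ∘ e.symm)
    rw [EquivLike.comp_surjective, EquivLike.surjective_comp]

theorem Nat.card_surjective_eq_surjCount {α β : Type*} [Finite α] [Finite β] :
    Nat.card {f : α → β // Surjective f} = surjCount (Nat.card α) (Nat.card β) :=
  Nat.card_surjective_congr (Finite.equivFin α) (Finite.equivFin β)

theorem surjCount_eq_zero_of_lt {n m : ℕ} (h : n < m) : surjCount n m = 0 := by
  have : IsEmpty {f : Fin n → Fin m // Surjective f} :=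
    ⟨fun f => (Fintype.card_le_of_surjective f.1 f.2).not_gt (by simpa using h)⟩
  simp [surjCount]

theorem surjCount_zero_right {n : ℕ} (hn : n ≠ 0) : surjCount n 0 = 0 := by
  have : IsEmpty {f : Fin n → Fin 0 // Surjective f} :=
    ⟨fun f => (f.1 ⟨0, Nat.pos_of_ne_zero hn⟩).elim0⟩
  simp [surjCount]

def rangeEqEquivSurjective {α β : Type*} (s : Set β) :
    {g : α → β // Set.range g = s} ≃ {h : α → s // Surjective h} where
  toFun g := ⟨fun x => ⟨g.1 x, g.2.subset (Set.mem_range_self x)⟩, fun b => by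
    obtain ⟨x, hx⟩ := g.2.symm.subset b.2
    exact ⟨x, Subtype.ext hx⟩⟩
  invFun h := ⟨Subtype.val ∘ h.1, by
    rw [Set.range_comp, h.2.range_eq, Set.image_univ, Subtype.range_coe]⟩
  left_inv _ := rfl
  right_inv _ := rfl

theorem Fin.surjective_cons_iff {β : Type*} {n : ℕ} (a : β) (g : Fin n → β) :
    Surjective (Fin.cons a g : Fin (n + 1) → β) ↔ Surjective g ∨ Set.range g = {a}ᶜ := by
  rw [← Set.range_eq_univ, Fin.range_cons, Set.insert_eq, ← Set.compl_subset_iff_union,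
    ← Set.range_eq_univ]
  constructor
  · intro h
    by_cases ha : a ∈ Set.range g
    · exact .inl (Set.eq_univ_of_forall fun b => by
        by_cases hb : b = a
        · exact hb ▸ ha
        · exact h hb)
    · exact .inr (subset_antisymm (Set.subset_compl_singleton_iff.2 ha) h)
  · rintro (h | h) <;> simp [h]

theorem Nat.card_surjective_fin_cons (n m : ℕ) (a : Fin (m + 1)) :
    Nat.card {g : Fin n → Fin (m + 1) // Surjective (Fin.cons a g : Fin (n + 1) → _)} =
      surjCount n (m + 1) + surjCount n m := by
  classical
  have hdisj : Disjoint (fun g : Fin n → Fin (m + 1) => Surjective g)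
      (fun g => Set.range g = {a}ᶜ) := by
    refine Pi.disjoint_iff.2 fun g => Prop.disjoint_iff.2 fun ⟨hs, hr⟩ => ?_
    have ha : a ∈ Set.range g := hs a
    rw [hr] at ha
    exact ha rfl
  rw [Nat.card_congr (Equiv.subtypeEquivRight fun g => Fin.surjective_cons_iff a g),
    Nat.card_eq_fintype_card, Fintype.card_subtype_or_disjoint _ _ hdisj,
    ← Nat.card_eq_fintype_card, ← Nat.card_eq_fintype_card]
  congr 1
  rw [Nat.card_congr (rangeEqEquivSurjective _), Nat.card_surjective_eq_surjCount, Nat.card_fin,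
    Nat.card_coe_set_eq, Set.ncard_compl, Set.ncard_singleton, Nat.card_fin, Nat.add_sub_cancel]

theorem surjCount_succ_succ (n m : ℕ) :
    surjCount (n + 1) (m + 1) = (m + 1) * (surjCount n (m + 1) + surjCount n m) := by
  let P : Fin (m + 1) → (Fin n → Fin (m + 1)) → Prop := fun a g =>
    Surjective (Fin.cons a g : Fin (n + 1) → _)
  have e : {p : Fin (m + 1) × (Fin n → Fin (m + 1)) // P p.1 p.2} ≃
      {f : Fin (n + 1) → Fin (m + 1) // Surjective f} :=
    (Fin.consEquiv fun _ => Fin (m + 1)).subtypeEquiv fun _ => Iff.rfl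
  rw [surjCount, ← Nat.card_congr e, Nat.card_congr (Equiv.subtypeProdEquivSigmaSubtype P),
    Nat.card_sigma]
  simp only [P, Nat.card_surjective_fin_cons, sum_const, card_univ, Fintype.card_fin, smul_eq_mul]

theorem sum_alternating_surjCount {n K : ℕ} (hn : 2 ≤ n) (hK : n ≤ K) :
    ∑ m ∈ Icc 1 K, ((-1 : ℝ) ^ (m - 1) / m) * surjCount n m = 0 := by
  obtain ⟨n, rfl⟩ : ∃ n', n = n' + 1 := ⟨n - 1, by omega⟩
  let f : ℕ → ℝ := fun m => -(-1) ^ m * surjCount n m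
  have hterm : ∀ m, ((-1 : ℝ) ^ (1 + m - 1) / (1 + m : ℕ)) * surjCount (n + 1) (1 + m) =
      f (m + 1) - f m := by
    intro m
    rw [add_comm 1 m, Nat.add_sub_cancel, surjCount_succ_succ]
    push_cast
    field_simp
    ring
  rw [← Finset.Ico_add_one_right_eq_Icc, sum_Ico_eq_sum_range, Nat.add_sub_cancel,
    sum_congr rfl fun m _ => hterm m, sum_range_sub]
  simp [f, surjCount_eq_zero_of_lt (show n < K by omega),
    surjCount_zero_right (show n ≠ 0 by omega)]

def surjectiveApplyEqEquiv {α β : Type*} [DecidableEq α] {a b : α} (hab : a ≠ b) :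
    {f : α → β // Surjective f ∧ f a = f b} ≃ {g : {x // x ≠ b} → β // Surjective g} where
  toFun f := ⟨fun x => f.1 x, fun y => by
    obtain ⟨x, rfl⟩ := f.2.1 y
    by_cases hx : x = b
    · exact ⟨⟨a, hab⟩, hx ▸ f.2.2⟩
    · exact ⟨⟨x, hx⟩, rfl⟩⟩
  invFun g := ⟨fun x => if hx : x = b then g.1 ⟨a, hab⟩ else g.1 ⟨x, hx⟩,
    fun y => by
      obtain ⟨x, rfl⟩ := g.2 y
      exact ⟨x.1, by simp [x.2]⟩,
    by simp [hab]⟩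
  left_inv f := by
    ext x
    by_cases hx : x = b
    · subst hx
      simp [f.2.2]
    · simp [hx]
  right_inv g := by
    ext x
    simp [x.2]

theorem sum_sq_sum_fiber {ι κ R : Type*} [Fintype ι] [Fintype κ] [DecidableEq κ]
    [CommSemiring R] (σ : ι → κ) (α : ι → R) :
    ∑ j, (∑ i with σ i = j, α i) ^ 2 = ∑ i, ∑ i', if σ i' = σ i then α i * α i' else 0 := by
  calc ∑ j, (∑ i with σ i = j, α i) ^ 2
      = ∑ j, ∑ i with σ i = j, ∑ i' with σ i' = σ i, α i * α i' := by
        refine sum_congr rfl fun j _ => ?_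
        rw [sq, sum_mul_sum]
        refine sum_congr rfl fun i hi => ?_
        rw [(mem_filter.1 hi).2]
    _ = ∑ i, ∑ i' with σ i' = σ i, α i * α i' := sum_fiberwise _ _ _
    _ = _ := by simp_rw [sum_filter]

theorem sum_sum_sq_sum_fiber {ι κ R : Type*} [Fintype ι] [Fintype κ] [DecidableEq κ]
    [CommSemiring R] (S : Finset (ι → κ)) (α : ι → R) :
    ∑ σ ∈ S, ∑ j, (∑ i with σ i = j, α i) ^ 2 =
      ∑ i, ∑ i', α i * α i' * #{σ ∈ S | σ i' = σ i} := by
  simp_rw [sum_sq_sum_fiber]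
  rw [sum_comm]
  refine sum_congr rfl fun i _ => ?_
  rw [sum_comm]
  refine sum_congr rfl fun i' _ => ?_
  rw [← sum_filter, sum_const, nsmul_eq_mul, mul_comm]

theorem card_filter_surjective_apply_eq {k m : ℕ} (i i' : Fin k) :
    #{σ : Fin k → Fin m | Surjective σ ∧ σ i' = σ i} =
      if i' = i then surjCount k m else surjCount (k - 1) m := by
  rw [← Fintype.card_subtype, ← Nat.card_eq_fintype_card]
  split_ifs with h
  · subst h
    simp [surjCount]
  · rw [Nat.card_congr (surjectiveApplyEqEquiv h), Nat.card_surjective_eq_surjCount]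
    simp

theorem sum_alternating_card_filter_surjective_apply_eq {k : ℕ} (hk : 3 ≤ k) (i i' : Fin k) :
    ∑ m ∈ Icc 1 k, ((-1 : ℝ) ^ (m - 1) / m) *
      (#{σ : Fin k → Fin m | Surjective σ ∧ σ i' = σ i} : ℝ) = 0 := by
  simp only [card_filter_surjective_apply_eq, apply_ite (Nat.cast : ℕ → ℝ)]
  split_ifs
  · exact sum_alternating_surjCount (by omega) le_rfl
  · exact sum_alternating_surjCount (by omega) (Nat.sub_le k 1)

theorem quadratic_lambda_vanishes (k : ℕ) (hk : 3 ≤ k) (α : Fin k → ℝ) :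
    ∑ m ∈ Finset.Icc 1 k, ((-1 : ℝ) ^ (m - 1) / m) *
      ∑ σ ∈ Finset.univ.filter (fun σ : Fin k → Fin m => Function.Surjective σ),
        ∑ j : Fin m, (∑ i ∈ Finset.univ.filter (fun i => σ i = j), α i) ^ 2 = 0 := by
  simp_rw [sum_sum_sq_sum_fiber, filter_filter, mul_sum]
  rw [sum_comm]
  refine sum_eq_zero fun i _ => ?_
  rw [sum_comm]
  refine sum_eq_zero fun i' _ => ?_
  simp_rw [mul_left_comm _ (α i * α i'), ← mul_sum,
    sum_alternating_card_filter_surjective_apply_eq hk, mul_zero]
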